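/- Let γ > 2, λ > 2, T_M > 1, fix 0 < S_min ≤ S_max < 1, let (Ω, μ) be a finite measure space, and let C₀ > 0. There exists C' > 0, depending only on γ, λ, T_M, S_min, S_max, μ(Ω) and C₀, such that for every ε ∈ (0, 1/4], every S_D ∈ [S_min, S_max], and every measurable function S : Ω → ℝ with ∫_Ω E_ε(S(x)) dμ(x) ≤ C₀, one has ∫_Ω Z_ε(S(x))^{2-γ} dμ(x) ≤ C' and ∫_Ω (1 − Z_ε(S(x)))^{2-λ} dμ(x) ≤ C'. -/

import Mathlib

/-!
In Taylor form `E_ε(s) = ∫_{S_D}^s (s - ξ) h_ε(ξ) dξ` with `h_ε ≥ 0`, the entropy is nonnegative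
and dominates the contribution of any stretch next to `s` on the side of `S_D`.
Put `z = Z_ε(s)`. Since `Z_ε` is `1`-Lipschitz, `Z_ε ≤ 2z` within distance `z` of `s`, so there
`h_ε ≥ (2z)^{-γ}`; if `z < S_min / 4` this stretch lies between `s` and `S_D`, whence
`E_ε(s) ≥ z²/2 · (2z)^{-γ} = 2^{-γ-1} z^{2-γ}`. Thus
`Z_ε(s)^{2-γ} ≤ 2^{γ+1} E_ε(s) + (S_min/4)^{2-γ}` pointwise, which integrates to the first bound.
The singularity at `1` is the mirror image under `s ↦ 1 - s`, as `1 - Z_ε(s) = Z_ε(1 - s)`.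
-/

open MeasureTheory

/-- The cutting function `Z(s) = min(max(s,0),1)`. -/
noncomputable def Z (s : ℝ) : ℝ := min (max s 0) 1

/-- The regularized cutting function `Z_ε(s) = (1−2ε)Z(s) + ε`. -/
noncomputable def Zeps (ε s : ℝ) : ℝ := (1 - 2 * ε) * Z s + ε

/-- The integrand `h_ε(ξ) = Z_ε(ξ)^{-γ} + T_M (1 − Z_ε(ξ))^{-λ}` of the regularized entropy. -/
noncomputable def heps (γ lam TM ε ξ : ℝ) : ℝ :=
  Zeps ε ξ ^ (-γ) + TM * (1 - Zeps ε ξ) ^ (-lam)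

/-- The regularized entropy with base point `S_D`. -/
noncomputable def Eeps (γ lam TM ε SD s : ℝ) : ℝ :=
  s * (∫ ξ in SD..s, heps γ lam TM ε ξ) - ∫ ξ in SD..s, ξ * heps γ lam TM ε ξ

open Set

section TaylorIntegral

variable {h : ℝ → ℝ} {a b c r s : ℝ}

theorem intervalIntegral_sub_mul_eq (hh : IntervalIntegrable h volume a b) :
    ∫ ξ in a..b, (b - ξ) * h ξ = b * (∫ ξ in a..b, h ξ) - ∫ ξ in a..b, ξ * h ξ := by
  rw [← intervalIntegral.integral_const_mul,
    ← intervalIntegral.integral_sub (hh.const_mul b)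
      (hh.continuousOn_mul (g := fun ξ => ξ) continuousOn_id)]
  exact intervalIntegral.integral_congr fun ξ _ => by ring

theorem intervalIntegral_sub_mul_comp_neg (a s : ℝ) :
    ∫ ξ in a..s, (s - ξ) * h ξ = ∫ ξ in -a..-s, (-s - ξ) * h (-ξ) := by
  rw [intervalIntegral.integral_symm, ← intervalIntegral.integral_comp_neg,
    ← intervalIntegral.integral_neg]
  exact intervalIntegral.integral_congr fun ξ _ => by simp only [neg_neg]; ring

theorem sq_div_two_mul_le_intervalIntegral_of_add_le (hh : Continuous h) (h0 : ∀ ξ, 0 ≤ h ξ)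
    (hr : 0 ≤ r) (hsa : s + r ≤ a) (hc : ∀ ξ ∈ Icc s (s + r), c ≤ h ξ) :
    r ^ 2 / 2 * c ≤ ∫ ξ in a..s, (s - ξ) * h ξ := by
  have hi : Continuous fun ξ => (ξ - s) * h ξ := by fun_prop
  calc r ^ 2 / 2 * c = ∫ ξ in s..s + r, (ξ - s) * c := by
        rw [intervalIntegral.integral_mul_const,
          intervalIntegral.integral_comp_sub_right (fun x => x), sub_self, add_sub_cancel_left, integral_id]
        ring
    _ ≤ ∫ ξ in s..s + r, (ξ - s) * h ξ :=
        intervalIntegral.integral_mono_on (by linarith)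
          ((by fun_prop : Continuous fun ξ : ℝ => (ξ - s) * c).intervalIntegrable _ _)
          (hi.intervalIntegrable _ _)
          fun ξ hξ => mul_le_mul_of_nonneg_left (hc ξ hξ) (by linarith [hξ.1])
    _ ≤ ∫ ξ in s..a, (ξ - s) * h ξ :=
        intervalIntegral.integral_mono_interval le_rfl (by linarith) hsa
          ((ae_restrict_iff' measurableSet_Ioc).2 (Filter.Eventually.of_forall fun ξ hξ =>
            mul_nonneg (by linarith [hξ.1]) (h0 ξ)))
          (hi.intervalIntegrable _ _)
    _ = ∫ ξ in a..s, (s - ξ) * h ξ := by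
        rw [intervalIntegral.integral_symm, ← intervalIntegral.integral_neg]
        exact intervalIntegral.integral_congr fun ξ _ => by ring

theorem sq_div_two_mul_le_intervalIntegral (hh : Continuous h) (h0 : ∀ ξ, 0 ≤ h ξ)
    (hr : 0 ≤ r) (hra : r ≤ |a - s|) (hc : ∀ ξ, |ξ - s| ≤ r → c ≤ h ξ) :
    r ^ 2 / 2 * c ≤ ∫ ξ in a..s, (s - ξ) * h ξ := by
  rcases le_total s a with hsa | has
  · refine sq_div_two_mul_le_intervalIntegral_of_add_le hh h0 hr ?_ fun ξ hξ => hc ξ ?_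
    · linarith [abs_of_nonneg (sub_nonneg.2 hsa)]
    · rw [abs_of_nonneg (by linarith [hξ.1])]; linarith [hξ.2]
  · rw [intervalIntegral_sub_mul_comp_neg]
    refine sq_div_two_mul_le_intervalIntegral_of_add_le (hh.comp continuous_neg)
      (fun ξ => h0 _) hr ?_ fun ξ hξ => hc _ ?_
    · linarith [abs_of_nonpos (sub_nonpos.2 has)]
    · rw [abs_of_nonpos (by linarith [hξ.1])]; linarith [hξ.2]

theorem intervalIntegral_sub_mul_nonneg (hh : Continuous h) (h0 : ∀ ξ, 0 ≤ h ξ) (a s : ℝ) :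
    0 ≤ ∫ ξ in a..s, (s - ξ) * h ξ := by
  simpa using sq_div_two_mul_le_intervalIntegral hh h0 le_rfl (abs_nonneg (a - s))
    fun ξ _ => h0 ξ

theorem rpow_two_sub_eq {z : ℝ} (hz : 0 < z) (p : ℝ) :
    z ^ (2 - p) = 2 ^ (p + 1) * (z ^ 2 / 2 * (2 * z) ^ (-p)) := by
  rw [Real.mul_rpow zero_le_two hz.le, Real.rpow_sub hz, Real.rpow_add two_pos,
    Real.rpow_neg hz.le, Real.rpow_neg zero_le_two, Real.rpow_two, Real.rpow_one]
  field_simp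

/-- Within distance `g s` of `s`, the Lipschitz bound gives `g ≤ 2 g s`, so `h ≥ (2 g s) ^ (-p)`
there. -/
theorem rpow_two_sub_le_intervalIntegral {g : ℝ → ℝ} {p δ : ℝ} (hh : Continuous h)
    (h0 : ∀ ξ, 0 ≤ h ξ) (hp : 2 ≤ p) (hg : ∀ ξ, 0 < g ξ) (hgL : LipschitzWith 1 g)
    (hgh : ∀ ξ, g ξ ^ (-p) ≤ h ξ) (hδ : 0 < δ) (hsmall : g s < δ → g s ≤ |a - s|) :
    g s ^ (2 - p) ≤ 2 ^ (p + 1) * (∫ ξ in a..s, (s - ξ) * h ξ) + δ ^ (2 - p) := by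
  have hI := intervalIntegral_sub_mul_nonneg hh h0 a s
  have h2p : (0 : ℝ) < 2 ^ (p + 1) := by positivity
  rcases le_or_gt δ (g s) with hlarge | hlt
  · have := Real.rpow_le_rpow_of_nonpos hδ hlarge (by linarith : 2 - p ≤ 0)
    nlinarith
  · have hnear : ∀ ξ, |ξ - s| ≤ g s → (2 * g s) ^ (-p) ≤ h ξ := fun ξ hξ => by
      have hLip : g ξ ≤ g s + |ξ - s| := by
        have := hgL.dist_le_mul ξ s
        simp only [Real.dist_eq, NNReal.coe_one, one_mul] at this
        linarith [le_abs_self (g ξ - g s)]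
      exact (Real.rpow_le_rpow_of_nonpos (hg ξ) (by linarith) (by linarith)).trans (hgh ξ)
    have := sq_div_two_mul_le_intervalIntegral hh h0 (hg s).le (hsmall hlt) hnear
    rw [rpow_two_sub_eq (hg s)]
    nlinarith [Real.rpow_nonneg hδ.le (2 - p)]

end TaylorIntegral

theorem lipschitzWith_Z : LipschitzWith 1 Z :=
  (LipschitzWith.id.max_const 0).min_const 1

theorem Z_nonneg (s : ℝ) : 0 ≤ Z s := le_min (le_max_right _ _) zero_le_one

theorem Z_one_sub (s : ℝ) : Z (1 - s) = 1 - Z s := by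
  simp only [Z, min_def, max_def]
  split_ifs <;> linarith

section Regularized

variable {γ lam TM ε : ℝ}

theorem Zeps_pos (hε : 0 < ε) (hε2 : ε ≤ 1 / 2) (s : ℝ) : 0 < Zeps ε s := by
  have := Z_nonneg s
  unfold Zeps; nlinarith

theorem one_sub_Zeps (ε s : ℝ) : 1 - Zeps ε s = Zeps ε (1 - s) := by
  simp only [Zeps, Z_one_sub]; ring

theorem Zeps_lt_one (hε : 0 < ε) (hε2 : ε ≤ 1 / 2) (s : ℝ) : Zeps ε s < 1 := by
  linarith [one_sub_Zeps ε s, Zeps_pos hε hε2 (1 - s)]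

theorem lipschitzWith_Zeps (hε : 0 ≤ ε) (hε2 : ε ≤ 1 / 2) : LipschitzWith 1 (Zeps ε) := by
  refine LipschitzWith.of_dist_le_mul fun x y => ?_
  have hZ := lipschitzWith_Z.dist_le_mul x y
  simp only [Real.dist_eq, Zeps, NNReal.coe_one, one_mul] at hZ ⊢
  rw [show (1 - 2 * ε) * Z x + ε - ((1 - 2 * ε) * Z y + ε) = (1 - 2 * ε) * (Z x - Z y) by ring,
    abs_mul, abs_of_nonneg (by linarith : (0 : ℝ) ≤ 1 - 2 * ε)]
  nlinarith [abs_nonneg (Z x - Z y)]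

theorem Zeps_le_abs_sub {δ a s : ℝ} (hε : 0 < ε) (hε4 : ε ≤ 1 / 4) (hδ : δ ≤ 1) (hδa : δ ≤ a)
    (hz : Zeps ε s < δ / 4) : Zeps ε s ≤ |a - s| := by
  have hZ : Z s ≤ 2 * Zeps ε s := by
    have := Z_nonneg s
    unfold Zeps; nlinarith
  have hsZ : s ≤ Z s := by
    simp only [Z, min_def, max_def] at hZ hz ⊢
    split_ifs at hZ hz ⊢ <;> nlinarith
  linarith [le_abs_self (a - s), Zeps_pos hε (by linarith) s]

theorem continuous_heps (hε : 0 < ε) (hε2 : ε ≤ 1 / 2) : Continuous (heps γ lam TM ε) := by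
  have hZ : Continuous (Zeps ε) := (lipschitzWith_Zeps hε.le hε2).continuous
  refine (hZ.rpow_const fun ξ => Or.inl (Zeps_pos hε hε2 ξ).ne').add
    (continuous_const.mul ((continuous_const.sub hZ).rpow_const fun ξ =>
      Or.inl (sub_pos.2 (Zeps_lt_one hε hε2 ξ)).ne'))

theorem rpow_neg_Zeps_le_heps (hε : 0 < ε) (hε2 : ε ≤ 1 / 2) (hTM : 0 ≤ TM) (ξ : ℝ) :
    Zeps ε ξ ^ (-γ) ≤ heps γ lam TM ε ξ :=
  le_add_of_nonneg_right
    (mul_nonneg hTM (Real.rpow_nonneg (by linarith [Zeps_lt_one hε hε2 ξ]) _))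

theorem rpow_neg_one_sub_Zeps_le_heps (hε : 0 < ε) (hε2 : ε ≤ 1 / 2) (hTM : 1 ≤ TM) (ξ : ℝ) :
    (1 - Zeps ε ξ) ^ (-lam) ≤ heps γ lam TM ε ξ := by
  have h1 : 0 ≤ Zeps ε ξ ^ (-γ) := Real.rpow_nonneg (Zeps_pos hε hε2 ξ).le _
  have h2 : 0 ≤ (1 - Zeps ε ξ) ^ (-lam) :=
    Real.rpow_nonneg (by linarith [Zeps_lt_one hε hε2 ξ]) _
  unfold heps; nlinarith

theorem heps_nonneg (hε : 0 < ε) (hε2 : ε ≤ 1 / 2) (hTM : 0 ≤ TM) (ξ : ℝ) :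
    0 ≤ heps γ lam TM ε ξ :=
  (Real.rpow_nonneg (Zeps_pos hε hε2 ξ).le _).trans (rpow_neg_Zeps_le_heps hε hε2 hTM ξ)

theorem Eeps_eq_intervalIntegral (hε : 0 < ε) (hε2 : ε ≤ 1 / 2) (SD s : ℝ) :
    Eeps γ lam TM ε SD s = ∫ ξ in SD..s, (s - ξ) * heps γ lam TM ε ξ :=
  (intervalIntegral_sub_mul_eq ((continuous_heps hε hε2).intervalIntegrable _ _)).symm

theorem Eeps_nonneg (hε : 0 < ε) (hε2 : ε ≤ 1 / 2) (hTM : 0 ≤ TM) (SD s : ℝ) :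
    0 ≤ Eeps γ lam TM ε SD s := by
  rw [Eeps_eq_intervalIntegral hε hε2]
  exact intervalIntegral_sub_mul_nonneg (continuous_heps hε hε2) (heps_nonneg hε hε2 hTM) SD s

theorem rpow_Zeps_le_Eeps {δ SD : ℝ} (hε : 0 < ε) (hε4 : ε ≤ 1 / 4) (hTM : 0 ≤ TM)
    (hγ : 2 ≤ γ) (hδ : 0 < δ) (hδ1 : δ ≤ 1) (hδSD : δ ≤ SD) (s : ℝ) :
    Zeps ε s ^ (2 - γ) ≤ 2 ^ (γ + 1) * Eeps γ lam TM ε SD s + (δ / 4) ^ (2 - γ) := by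
  have hε2 : ε ≤ 1 / 2 := by linarith
  rw [Eeps_eq_intervalIntegral hε hε2]
  exact rpow_two_sub_le_intervalIntegral (continuous_heps hε hε2) (heps_nonneg hε hε2 hTM) hγ
    (Zeps_pos hε hε2) (lipschitzWith_Zeps hε.le hε2) (rpow_neg_Zeps_le_heps hε hε2 hTM)
    (by positivity) (Zeps_le_abs_sub hε hε4 hδ1 hδSD)

theorem rpow_one_sub_Zeps_le_Eeps {δ SD : ℝ} (hε : 0 < ε) (hε4 : ε ≤ 1 / 4) (hTM : 1 ≤ TM)
    (hlam : 2 ≤ lam) (hδ : 0 < δ) (hδ1 : δ ≤ 1) (hSDδ : SD ≤ 1 - δ) (s : ℝ) :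
    (1 - Zeps ε s) ^ (2 - lam) ≤ 2 ^ (lam + 1) * Eeps γ lam TM ε SD s + (δ / 4) ^ (2 - lam) := by
  have hε2 : ε ≤ 1 / 2 := by linarith
  have hsmall : 1 - Zeps ε s < δ / 4 → 1 - Zeps ε s ≤ |SD - s| := fun h => by
    rw [one_sub_Zeps] at h ⊢
    simpa [abs_sub_comm] using Zeps_le_abs_sub hε hε4 hδ1 (by linarith : δ ≤ 1 - SD) h
  rw [Eeps_eq_intervalIntegral hε hε2]
  exact rpow_two_sub_le_intervalIntegral (g := fun ξ => 1 - Zeps ε ξ) (continuous_heps hε hε2)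
    (heps_nonneg hε hε2 (by linarith)) hlam (fun ξ => sub_pos.2 (Zeps_lt_one hε hε2 ξ))
    (by simpa using (LipschitzWith.const' (1 : ℝ) (K := 0)).sub (lipschitzWith_Zeps hε.le hε2))
    (rpow_neg_one_sub_Zeps_le_heps hε hε2 hTM) (by positivity) hsmall

end Regularized

theorem lintegral_ofReal_le_of_le_mul_add {Ω : Type*} [MeasurableSpace Ω] {μ : Measure Ω}
    [IsFiniteMeasure μ] {f E : Ω → ℝ} {A B C : ℝ} (hA : 0 ≤ A) (hB : 0 ≤ B)
    (hE0 : ∀ x, 0 ≤ E x) (hEi : Integrable E μ) (hEC : ∫ x, E x ∂μ ≤ C)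
    (hf : ∀ x, f x ≤ A * E x + B) :
    ∫⁻ x, ENNReal.ofReal (f x) ∂μ ≤ ENNReal.ofReal (A * C + B * μ.real univ) := by
  have hi : Integrable (fun x => A * E x + B) μ := (hEi.const_mul A).add (integrable_const B)
  calc ∫⁻ x, ENNReal.ofReal (f x) ∂μ ≤ ∫⁻ x, ENNReal.ofReal (A * E x + B) ∂μ :=
        lintegral_mono fun x => ENNReal.ofReal_le_ofReal (hf x)
    _ = ENNReal.ofReal (∫ x, (A * E x + B) ∂μ) :=
        (ofReal_integral_eq_lintegral_ofReal hi
          (Filter.Eventually.of_forall fun x =>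
            add_nonneg (mul_nonneg hA (hE0 x)) hB)).symm
    _ ≤ ENNReal.ofReal (A * C + B * μ.real univ) := by
        rw [integral_add (hEi.const_mul A) (integrable_const B), integral_const_mul,
          integral_const, smul_eq_mul, mul_comm (μ.real univ)]
        gcongr

/-- Proposition 7.1 of the paper (estimates (AE.5)–(AE.6), quantitative version):
a uniform bound on the integrated regularized entropy yields uniform bounds on
`∫ Z_ε(S)^{2−γ}` and `∫ (1−Z_ε(S))^{2−λ}`. -/
theorem entropy_bound_controls_singular_moments
    (γ lam TM : ℝ) (hγ : 2 < γ) (hlam : 2 < lam) (hTM : 1 < TM)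
    (Smin Smax : ℝ) (h0 : 0 < Smin) (h1 : Smin ≤ Smax) (h2 : Smax < 1)
    (Ω : Type*) [MeasurableSpace Ω] (μ : Measure Ω) [IsFiniteMeasure μ]
    (C0 : ℝ) (hC0 : 0 < C0) :
    ∃ C' > (0:ℝ),
      ∀ ε ∈ Set.Ioc (0:ℝ) (1/4), ∀ SD ∈ Set.Icc Smin Smax, ∀ S : Ω → ℝ,
        Measurable S →
        Integrable (fun x => Eeps γ lam TM ε SD (S x)) μ →
        (∫ x, Eeps γ lam TM ε SD (S x) ∂μ) ≤ C0 →
        (∫⁻ x, ENNReal.ofReal (Zeps ε (S x) ^ (2 - γ)) ∂μ) ≤ ENNReal.ofReal C' ∧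
        (∫⁻ x, ENNReal.ofReal ((1 - Zeps ε (S x)) ^ (2 - lam)) ∂μ) ≤
          ENNReal.ofReal C' := by
  set CA := 2 ^ (γ + 1) * C0 + (Smin / 4) ^ (2 - γ) * μ.real univ
  set CB := 2 ^ (lam + 1) * C0 + ((1 - Smax) / 4) ^ (2 - lam) * μ.real univ
  have hSmax : 0 < 1 - Smax := by linarith
  refine ⟨max CA CB, lt_max_of_lt_left (by positivity), ?_⟩
  rintro ε ⟨hε, hε4⟩ SD ⟨hSD1, hSD2⟩ S - hEi hEC
  have hE0 : ∀ x, 0 ≤ Eeps γ lam TM ε SD (S x) := fun x =>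
    Eeps_nonneg hε (by linarith) (by linarith) SD (S x)
  constructor
  · refine (lintegral_ofReal_le_of_le_mul_add (by positivity) (by positivity) hE0 hEi hEC
      fun x => ?_).trans (ENNReal.ofReal_le_ofReal (le_max_left CA CB))
    exact rpow_Zeps_le_Eeps hε hε4 (by linarith) hγ.le h0 (by linarith) hSD1 (S x)
  · refine (lintegral_ofReal_le_of_le_mul_add (by positivity) (by positivity) hE0 hEi hEC
      fun x => ?_).trans (ENNReal.ofReal_le_ofReal (le_max_right CA CB))
    exact rpow_one_sub_Zeps_le_Eeps hε hε4 hTM.le hlam.le hSmax (by linarith) (by linarith) (S x)
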